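/- For matrices W₁, W₂ ∈ ℝ^{n×r} with rank(W₁) = r: ‖W₁W₁ᵀ − W₂W₂ᵀ‖_F ≥ 2(√2 − 1) σ_r(W₁) dist(W₁, W₂), where σ_r(W₁) is the smallest singular value of W₁ and dist(W₁,W₂) = min_{R ∈ O(r)} ‖W₁ − W₂R‖_F. -/

import Mathlib

open Matrix

noncomputable def singularValues {m n : Type*} [Fintype m] [Fintype n] [DecidableEq n]
    (X : Matrix m n ℝ) : n → ℝ :=
  fun i => Real.sqrt ((show (Xᵀ * X).IsHermitian by
    simpa using Matrix.isHermitian_conjTranspose_mul_self X).eigenvalues i)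

noncomputable def nuclearNorm {m n : Type*} [Fintype m] [Fintype n] [DecidableEq n]
    (X : Matrix m n ℝ) : ℝ := ∑ i, singularValues X i

noncomputable def frobNorm {m n : Type*} [Fintype m] [Fintype n] (X : Matrix m n ℝ) : ℝ :=
  Real.sqrt ((Xᵀ * X).trace)

noncomputable def matSpectralNorm {m n : Type*} [Fintype m] [Fintype n] [DecidableEq m] [DecidableEq n]
    (X : Matrix m n ℝ) : ℝ :=
  ‖LinearMap.toContinuousLinearMap (Matrix.toEuclideanLin X)‖

noncomputable def smallestNonzeroSV {m n : Type*} [Fintype m] [Fintype n] [DecidableEq n]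
    (X : Matrix m n ℝ) : ℝ :=
  sInf {s | (∃ i, singularValues X i = s) ∧ s ≠ 0}

noncomputable def distO {n r : ℕ} (W₁ W₂ : Matrix (Fin n) (Fin r) ℝ) : ℝ :=
  sInf {d | ∃ R : Matrix (Fin r) (Fin r) ℝ, Rᵀ * R = 1 ∧ d = frobNorm (W₁ - W₂ * R)}

attribute [local instance] Matrix.normedAddCommGroup Matrix.normedSpace

/-!
Let `R ∈ O(r)` maximise `tr (W₁ᵀ W₂ R)` over the compact group `O(r)`. Comparing with `R` composed
with Householder reflections and with products of two of them shows that `P = W₁ᵀ W₂ R` is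
symmetric positive semidefinite, so `R` realises a polar decomposition of `W₁ᵀ W₂`.

Put `A = W₁`, `B = W₂ R` (so `B Bᵀ = W₂ W₂ᵀ`) and `T = (A - B)ᵀ (A - B)`. The symmetry of `P` gives
`‖A Aᵀ - B Bᵀ‖² = ⟨AᵀA, T⟩ + ⟨BᵀB, T⟩ + ‖AᵀA - BᵀB‖² / 2 - ‖T‖² / 2`.
Since `T = AᵀA + BᵀB - 2P` with `P ⪰ 0`, `‖T‖² ≤ ⟨AᵀA, T⟩ + ⟨BᵀB, T⟩`, and by Cauchy–Schwarz
`⟨AᵀA, T⟩ - ⟨BᵀB, T⟩ ≤ ‖AᵀA - BᵀB‖ ‖T‖`. With `g t ≤ g² + t² / 4` this yields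
`‖A Aᵀ - B Bᵀ‖² ≥ 4/5 ⟨AᵀA, T⟩ ≥ 4/5 σ_r(A)² ‖A - B‖²`, and `(2 (√2 - 1))² ≤ 4/5`.
-/

section Frobenius

variable {m k : Type*} [Fintype m] [Fintype k]

lemma trace_transpose_mul_self_nonneg (X : Matrix m k ℝ) : 0 ≤ (Xᵀ * X).trace := by
  rw [← vec_dotProduct_vec]
  exact dotProduct_star_self_nonneg _

lemma posSemidef_transpose_mul_self (X : Matrix m k ℝ) : (Xᵀ * X).PosSemidef := by
  simpa only [conjTranspose_eq_transpose_of_trivial] using posSemidef_conjTranspose_mul_self X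

lemma frobNorm_nonneg (X : Matrix m k ℝ) : 0 ≤ frobNorm X := Real.sqrt_nonneg _

lemma frobNorm_sq (X : Matrix m k ℝ) : frobNorm X ^ 2 = (Xᵀ * X).trace :=
  Real.sq_sqrt (trace_transpose_mul_self_nonneg X)

lemma trace_transpose_mul_le_frobNorm_mul (X Y : Matrix m k ℝ) :
    (Xᵀ * Y).trace ≤ frobNorm X * frobNorm Y := by
  simpa only [frobNorm, ← vec_dotProduct_vec, dotProduct, pow_two] using
    Real.sum_mul_le_sqrt_mul_sqrt Finset.univ X.vec Y.vec

end Frobenius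

section PosSemidef

variable {k : Type*} [Fintype k]

lemma Matrix.trace_mul_vecMulVec (N : Matrix k k ℝ) (a b : k → ℝ) :
    (N * vecMulVec a b).trace = b ⬝ᵥ N *ᵥ a := by
  rw [mul_vecMulVec, trace_vecMulVec, dotProduct_comm]

lemma Matrix.vecMulVec_self_mul_self (v : k → ℝ) :
    vecMulVec v v * vecMulVec v v = (v ⬝ᵥ v) • vecMulVec v v := by
  rw [vecMulVec_mul_vecMulVec, vecMulVec_smul]

lemma Matrix.PosSemidef.trace_mul_nonneg {M N : Matrix k k ℝ} (hM : M.PosSemidef)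
    (hN : N.PosSemidef) : 0 ≤ (M * N).trace := by
  obtain ⟨_, v, rfl⟩ := posSemidef_iff_eq_sum_vecMulVec.mp hN
  simp only [Finset.mul_sum, trace_sum, trace_mul_vecMulVec]
  exact Finset.sum_nonneg fun i _ => hM.dotProduct_mulVec_nonneg (v i)

lemma Matrix.IsHermitian.posSemidef_sub_smul_one [DecidableEq k] {A : Matrix k k ℝ}
    (hA : A.IsHermitian) {s : ℝ} (hs : ∀ i, s ≤ hA.eigenvalues i) : (A - s • 1).PosSemidef := by
  have hB : (A - s • 1).IsHermitian := hA.sub (isHermitian_one.smul (IsSelfAdjoint.all s))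
  refine hB.posSemidef_iff_eigenvalues_nonneg.mpr fun i => ?_
  have hi := hB.eigenvalues_mem_spectrum_real i
  generalize hB.eigenvalues i = μ at hi ⊢
  rw [← Algebra.algebraMap_eq_smul_one, ← spectrum.sub_singleton_eq,
    hA.spectrum_real_eq_range_eigenvalues] at hi
  obtain ⟨_, ⟨j, rfl⟩, _, rfl, hj⟩ := hi
  simpa [← hj] using hs j

end PosSemidef

section Householder

variable {k : Type*} [Fintype k] [DecidableEq k]

-- `householder 0 = 1`, since `2 / 0 = 0`.
noncomputable def householder (v : k → ℝ) : Matrix k k ℝ := 1 - (2 / (v ⬝ᵥ v)) • vecMulVec v v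

lemma householder_transpose (v : k → ℝ) : (householder v)ᵀ = householder v := by
  simp [householder, transpose_sub, transpose_smul]

lemma householder_mem_orthogonalGroup (v : k → ℝ) :
    householder v ∈ orthogonalGroup k ℝ := by
  rw [mem_orthogonalGroup_iff', householder_transpose]
  rcases eq_or_ne v 0 with rfl | hv
  · simp [householder]
  have hvv : v ⬝ᵥ v ≠ 0 := fun h => hv (dotProduct_self_eq_zero.mp h)
  have hc : 2 / (v ⬝ᵥ v) * (2 / (v ⬝ᵥ v)) * (v ⬝ᵥ v) = 2 * (2 / (v ⬝ᵥ v)) := by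
    field_simp
  set c := 2 / (v ⬝ᵥ v)
  calc householder v * householder v
      = 1 - (2 * c - c * c * (v ⬝ᵥ v)) • vecMulVec v v := by
        simp only [householder, sub_mul, mul_sub, one_mul, mul_one, smul_mul_smul_comm,
          vecMulVec_self_mul_self, smul_smul]
        module
    _ = 1 := by rw [hc, sub_self, zero_smul, sub_zero]

lemma trace_mul_householder (N : Matrix k k ℝ) (v : k → ℝ) :
    (N * householder v).trace = N.trace - 2 / (v ⬝ᵥ v) * (v ⬝ᵥ N *ᵥ v) := by
  simp [householder, mul_sub, trace_sub, trace_mul_vecMulVec]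

lemma trace_mul_householder_mul_householder (N : Matrix k k ℝ) (u v : k → ℝ) :
    (N * (householder u * householder v)).trace = N.trace - 2 / (u ⬝ᵥ u) * (u ⬝ᵥ N *ᵥ u)
      - 2 / (v ⬝ᵥ v) * (v ⬝ᵥ N *ᵥ v)
      + 2 / (u ⬝ᵥ u) * (2 / (v ⬝ᵥ v)) * (u ⬝ᵥ v) * (v ⬝ᵥ N *ᵥ u) := by
  simp only [householder, sub_mul, mul_sub, one_mul, mul_one, smul_mul_smul_comm,
    vecMulVec_mul_vecMulVec, vecMulVec_smul, Matrix.mul_smul, trace_sub, trace_smul,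
    trace_mul_vecMulVec, smul_eq_mul]
  ring

end Householder

lemma eq_zero_of_forall_mul_le_sq_mul {c d : ℝ} (h : ∀ t : ℝ, t * c ≤ t ^ 2 * d) : c = 0 := by
  have ht := h (c / (|d| + 1))
  have hd : 0 < |d| + 1 := by positivity
  rw [div_pow, div_mul_eq_mul_div, div_mul_eq_mul_div, div_le_div_iff₀ hd (by positivity)] at ht
  have hpos : 0 < (|d| + 1) * (|d| + 1 - d) := mul_pos hd (by linarith [le_abs_self d])
  have hc : c ^ 2 = 0 := le_antisymm (by nlinarith) (sq_nonneg c)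
  exact pow_eq_zero_iff two_ne_zero |>.mp hc

section TraceMaximizer

variable {k : Type*} [Fintype k] [DecidableEq k]

lemma dotProduct_mulVec_self_nonneg_of_forall_trace_mul_le {N : Matrix k k ℝ}
    (hN : ∀ Q ∈ orthogonalGroup k ℝ, (N * Q).trace ≤ N.trace) (v : k → ℝ) :
    0 ≤ v ⬝ᵥ N *ᵥ v := by
  have h := hN _ (householder_mem_orthogonalGroup v)
  rw [trace_mul_householder] at h
  rcases eq_or_ne v 0 with rfl | hv
  · simp
  have hvv : 0 < v ⬝ᵥ v := lt_of_le_of_ne (dotProduct_star_self_nonneg v)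
    (Ne.symm fun h => hv (dotProduct_self_eq_zero.mp h))
  have : 0 ≤ 2 / (v ⬝ᵥ v) * (v ⬝ᵥ N *ᵥ v) := by linarith
  exact (mul_nonneg_iff_of_pos_left (div_pos two_pos hvv)).mp this

lemma isHermitian_of_forall_trace_mul_le {N : Matrix k k ℝ}
    (hN : ∀ Q ∈ orthogonalGroup k ℝ, (N * Q).trace ≤ N.trace) : N.IsHermitian := by
  ext i j
  rcases eq_or_ne j i with rfl | hji
  · rfl
  simp only [conjTranspose_apply, star_trivial]
  -- The reflections in `eᵢ` and `eᵢ + t eⱼ` compose to a rotation by an angle of order `t` in the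
  -- `(i, j)`-plane, which changes the trace to first order by `t (N j i - N i j)`.
  suffices ∀ t : ℝ, t * (N j i - N i j) ≤ t ^ 2 * (N i i + N j j) by
    linarith [eq_zero_of_forall_mul_le_sq_mul this]
  intro t
  have h := hN _ (mul_mem (householder_mem_orthogonalGroup (Pi.single i 1))
    (householder_mem_orthogonalGroup (Pi.single i 1 + t • Pi.single j 1)))
  rw [trace_mul_householder_mul_householder] at h
  simp only [dotProduct_single, Pi.single_eq_same, mul_one, div_one, mulVec_single,
    MulOpposite.op_one, one_smul, single_dotProduct, col_apply, one_mul, dotProduct_add,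
    Pi.add_apply, Pi.smul_apply, ne_eq, hji.symm, not_false_eq_true, Pi.single_eq_of_ne,
    smul_eq_mul, mul_zero, add_zero, dotProduct_smul, hji, zero_add, mulVec_add, mulVec_smul,
    add_dotProduct, smul_dotProduct] at h
  have ht : 0 < 1 + t * t := by nlinarith [mul_self_nonneg t]
  field_simp at h
  nlinarith

lemma posSemidef_of_forall_trace_mul_le {N : Matrix k k ℝ}
    (hN : ∀ Q ∈ orthogonalGroup k ℝ, (N * Q).trace ≤ N.trace) : N.PosSemidef :=
  .of_dotProduct_mulVec_nonneg (isHermitian_of_forall_trace_mul_le hN)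
    (dotProduct_mulVec_self_nonneg_of_forall_trace_mul_le hN)

end TraceMaximizer

section Polar

variable {k : Type*} [Fintype k] [DecidableEq k]

lemma isCompact_orthogonalGroup : IsCompact (orthogonalGroup k ℝ : Set (Matrix k k ℝ)) := by
  refine Metric.isCompact_of_isClosed_isBounded ?_ ?_
  · have h : (orthogonalGroup k ℝ : Set (Matrix k k ℝ)) = {R | Rᵀ * R = 1} :=
      Set.ext fun _ => mem_orthogonalGroup_iff' k ℝ
    rw [h]
    exact isClosed_eq (continuous_id.matrix_transpose.matrix_mul continuous_id) continuous_const
  · refine (Metric.isBounded_iff_subset_closedBall 0).mpr ⟨1, fun U hU => ?_⟩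
    rw [Metric.mem_closedBall, dist_zero_right]
    exact entrywise_sup_norm_bound_of_unitary hU

lemma exists_mem_orthogonalGroup_posSemidef_mul (M : Matrix k k ℝ) :
    ∃ R ∈ orthogonalGroup k ℝ, (M * R).PosSemidef := by
  obtain ⟨R, hR, hmax⟩ := isCompact_orthogonalGroup.exists_isMaxOn
    ⟨1, one_mem (orthogonalGroup k ℝ)⟩
    (continuous_const.matrix_mul continuous_id).matrix_trace.continuousOn
  refine ⟨R, hR, posSemidef_of_forall_trace_mul_le fun Q hQ => ?_⟩
  rw [Matrix.mul_assoc]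
  exact hmax (mul_mem hR hQ)

end Polar

lemma four_fifths_mul_le {a h g t : ℝ} (ht : t ^ 2 ≤ a + h) (hCS : a - h ≤ g * t) :
    4 / 5 * a ≤ a + h + g ^ 2 / 2 - t ^ 2 / 2 := by
  nlinarith [sq_nonneg (g - t / 2)]

section GramDifference

variable {m k : Type*} [Fintype m] [Fintype k] {A B : Matrix m k ℝ}

lemma frobNorm_sq_mul_transpose_sub (hAB : Bᵀ * A = Aᵀ * B) :
    frobNorm (A * Aᵀ - B * Bᵀ) ^ 2
      = (Aᵀ * A * ((A - B)ᵀ * (A - B))).trace + (Bᵀ * B * ((A - B)ᵀ * (A - B))).trace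
        + frobNorm (Aᵀ * A - Bᵀ * B) ^ 2 / 2 - frobNorm ((A - B)ᵀ * (A - B)) ^ 2 / 2 := by
  have cyc : ∀ X Y : Matrix m k ℝ, (X * Xᵀ * (Y * Yᵀ)).trace = (Xᵀ * Y * (Yᵀ * X)).trace :=
    fun X Y => by rw [trace_mul_cycle, Matrix.mul_assoc Y, trace_mul_cycle Y]
  simp only [frobNorm_sq, transpose_sub, transpose_mul, transpose_transpose, Matrix.mul_sub,
    Matrix.sub_mul, trace_sub, hAB]
  rw [cyc A A, cyc B A, cyc A B, cyc B B, hAB, trace_mul_comm (Bᵀ * B) (Aᵀ * A),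
    trace_mul_comm (Aᵀ * B) (Aᵀ * A), trace_mul_comm (Aᵀ * B) (Bᵀ * B)]
  ring

lemma frobNorm_sq_transpose_mul_self_sub_le (hP : (Aᵀ * B).PosSemidef) :
    frobNorm ((A - B)ᵀ * (A - B)) ^ 2
      ≤ (Aᵀ * A * ((A - B)ᵀ * (A - B))).trace + (Bᵀ * B * ((A - B)ᵀ * (A - B))).trace := by
  set T := (A - B)ᵀ * (A - B) with hT
  have hAB : Bᵀ * A = Aᵀ * B := by simpa using hP.1.eq
  have hTexp : T = Aᵀ * A + Bᵀ * B - Aᵀ * B - Aᵀ * B := by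
    simp only [hT, transpose_sub, Matrix.sub_mul, Matrix.mul_sub, hAB]
    abel
  have hTP := (posSemidef_transpose_mul_self (A - B)).trace_mul_nonneg hP
  calc frobNorm T ^ 2 = (T * T).trace := by
        rw [frobNorm_sq, hT, transpose_mul, transpose_transpose]
    _ = (T * (Aᵀ * A + Bᵀ * B - Aᵀ * B - Aᵀ * B)).trace := by nth_rw 2 [hTexp]
    _ = (Aᵀ * A * T).trace + (Bᵀ * B * T).trace - 2 * (T * (Aᵀ * B)).trace := by
        simp only [Matrix.mul_add, Matrix.mul_sub, trace_add, trace_sub, trace_mul_comm T]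
        ring
    _ ≤ _ := by linarith

lemma trace_mul_sub_trace_mul_le :
    (Aᵀ * A * ((A - B)ᵀ * (A - B))).trace - (Bᵀ * B * ((A - B)ᵀ * (A - B))).trace
      ≤ frobNorm (Aᵀ * A - Bᵀ * B) * frobNorm ((A - B)ᵀ * (A - B)) := by
  have h := trace_transpose_mul_le_frobNorm_mul (Aᵀ * A - Bᵀ * B) ((A - B)ᵀ * (A - B))
  rwa [transpose_sub, transpose_mul, transpose_mul, transpose_transpose, transpose_transpose,
    Matrix.sub_mul, trace_sub] at h

lemma four_fifths_mul_trace_le_frobNorm_sq (hP : (Aᵀ * B).PosSemidef) :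
    4 / 5 * (Aᵀ * A * ((A - B)ᵀ * (A - B))).trace ≤ frobNorm (A * Aᵀ - B * Bᵀ) ^ 2 := by
  rw [frobNorm_sq_mul_transpose_sub (by simpa using hP.1.eq)]
  exact four_fifths_mul_le (frobNorm_sq_transpose_mul_self_sub_le hP) trace_mul_sub_trace_mul_le

lemma mul_frobNorm_sq_le_trace_mul [DecidableEq k] {s : ℝ} (hA : (Aᵀ * A - s • 1).PosSemidef) :
    s * frobNorm (A - B) ^ 2 ≤ (Aᵀ * A * ((A - B)ᵀ * (A - B))).trace := by
  have h := hA.trace_mul_nonneg (posSemidef_transpose_mul_self (A - B))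
  rw [Matrix.sub_mul, trace_sub, smul_mul, one_mul, trace_smul, smul_eq_mul] at h
  rw [frobNorm_sq]
  linarith

end GramDifference

lemma two_mul_sqrt_two_sub_one_sq_le : (2 * (Real.sqrt 2 - 1)) ^ 2 ≤ 4 / 5 := by
  have h2 : Real.sqrt 2 ^ 2 = 2 := Real.sq_sqrt zero_le_two
  have h14 : 7 / 5 ≤ Real.sqrt 2 := Real.le_sqrt_of_sq_le (by norm_num)
  nlinarith

lemma mul_frobNorm_sub_le_frobNorm_mul_transpose_sub {m k : Type*} [Fintype m] [Fintype k]
    [DecidableEq k] {A B : Matrix m k ℝ} (hP : (Aᵀ * B).PosSemidef) {σ : ℝ}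
    (hA : (Aᵀ * A - σ ^ 2 • 1).PosSemidef) :
    2 * (Real.sqrt 2 - 1) * σ * frobNorm (A - B) ≤ frobNorm (A * Aᵀ - B * Bᵀ) := by
  refine le_of_sq_le_sq ?_ (frobNorm_nonneg _)
  calc (2 * (Real.sqrt 2 - 1) * σ * frobNorm (A - B)) ^ 2
      = (2 * (Real.sqrt 2 - 1)) ^ 2 * (σ ^ 2 * frobNorm (A - B) ^ 2) := by ring
    _ ≤ 4 / 5 * (σ ^ 2 * frobNorm (A - B) ^ 2) :=
        mul_le_mul_of_nonneg_right two_mul_sqrt_two_sub_one_sq_le (by positivity)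
    _ ≤ 4 / 5 * (Aᵀ * A * ((A - B)ᵀ * (A - B))).trace := by
        gcongr; exact mul_frobNorm_sq_le_trace_mul hA
    _ ≤ frobNorm (A * Aᵀ - B * Bᵀ) ^ 2 := four_fifths_mul_trace_le_frobNorm_sq hP

lemma posSemidef_transpose_mul_self_sub_sq_iInf_singularValues {m k : Type*} [Fintype m]
    [Fintype k] [DecidableEq k] (X : Matrix m k ℝ) :
    (Xᵀ * X - (⨅ i, singularValues X i) ^ 2 • 1).PosSemidef := by
  have hX : (Xᵀ * X).IsHermitian := (posSemidef_transpose_mul_self X).1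
  refine hX.posSemidef_sub_smul_one fun i => ?_
  have hle : ⨅ j, singularValues X j ≤ singularValues X i :=
    ciInf_le ⟨0, Set.forall_mem_range.mpr fun _ => Real.sqrt_nonneg _⟩ i
  calc (⨅ j, singularValues X j) ^ 2 ≤ singularValues X i ^ 2 :=
        pow_le_pow_left₀ (Real.iInf_nonneg fun _ => Real.sqrt_nonneg _) hle 2
    _ = hX.eigenvalues i := Real.sq_sqrt ((posSemidef_transpose_mul_self X).eigenvalues_nonneg i)

lemma distO_le_frobNorm {n r : ℕ} (W₁ W₂ : Matrix (Fin n) (Fin r) ℝ)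
    {R : Matrix (Fin r) (Fin r) ℝ} (hR : R ∈ orthogonalGroup (Fin r) ℝ) :
    distO W₁ W₂ ≤ frobNorm (W₁ - W₂ * R) :=
  csInf_le ⟨0, fun _ ⟨_, _, hd⟩ => hd ▸ frobNorm_nonneg _⟩
    ⟨R, (mem_orthogonalGroup_iff' _ ℝ).mp hR, rfl⟩

theorem stmt12_general {n r : ℕ} (W₁ W₂ : Matrix (Fin n) (Fin r) ℝ) :
    2 * (Real.sqrt 2 - 1) * (⨅ i, singularValues W₁ i) * distO W₁ W₂
      ≤ frobNorm (W₁ * W₁ᵀ - W₂ * W₂ᵀ) := by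
  obtain ⟨R, hR, hP⟩ := exists_mem_orthogonalGroup_posSemidef_mul (W₁ᵀ * W₂)
  have hσ : 0 ≤ ⨅ i, singularValues W₁ i := Real.iInf_nonneg fun _ => Real.sqrt_nonneg _
  have hRRt : R * Rᵀ = 1 := (mem_orthogonalGroup_iff _ ℝ).mp hR
  calc 2 * (Real.sqrt 2 - 1) * (⨅ i, singularValues W₁ i) * distO W₁ W₂
      ≤ 2 * (Real.sqrt 2 - 1) * (⨅ i, singularValues W₁ i) * frobNorm (W₁ - W₂ * R) := by
        refine mul_le_mul_of_nonneg_left (distO_le_frobNorm W₁ W₂ hR) (mul_nonneg ?_ hσ)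
        linarith [Real.one_lt_sqrt_two]
    _ ≤ frobNorm (W₁ * W₁ᵀ - W₂ * R * (W₂ * R)ᵀ) :=
        mul_frobNorm_sub_le_frobNorm_mul_transpose_sub (by rwa [← Matrix.mul_assoc])
          (posSemidef_transpose_mul_self_sub_sq_iInf_singularValues W₁)
    _ = frobNorm (W₁ * W₁ᵀ - W₂ * W₂ᵀ) := by
        rw [transpose_mul, Matrix.mul_assoc, ← Matrix.mul_assoc R, hRRt, Matrix.one_mul]

theorem stmt12 {n r : ℕ} (W₁ W₂ : Matrix (Fin n) (Fin r) ℝ) (hrank : W₁.rank = r) :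
    2 * (Real.sqrt 2 - 1) * (⨅ i, singularValues W₁ i) * distO W₁ W₂
      ≤ frobNorm (W₁ * W₁ᵀ - W₂ * W₂ᵀ) :=
  stmt12_general W₁ W₂
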